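/- For every finite set N of divisions, every assignment partition ((N_k, X_k))_{k=1}^K of N, and every strict priority order ▷ on N, the Chain Serial Dictatorship (C-SD) mechanism respects improvement: whenever ≻' is an improvement for division i with respect to ≻, f^C_i(≻') ⪰_i f^C_i(≻). -/
import Mathlib


open scoped Classical

/-- Each division has a strict linear (total) preference order over workers. -/
def StrictProfile {α : Type*} (pref : α → α → α → Prop) : Prop :=
  ∀ i, IsStrictTotalOrder α (pref i)

/-- `pref'` is an improvement for division `i` with respect to `pref`. -/
def Improvement {α : Type*} (pref pref' : α → α → α → Prop) (i : α) : Prop :=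
  pref' i = pref i ∧
  (∀ j, j ≠ i → ∀ k, k ≠ i → pref j i k → pref' j i k) ∧
  (∀ j, j ≠ i → ∀ k, k ≠ i → ∀ l, l ≠ i → (pref j k l ↔ pref' j k l))

/-- The `r`-maximum element of the finite set `s` (chosen via Hilbert choice):
the element of `s` that `r`-beats every other element of `s`. -/
noncomputable def pick {α : Type*} [Nonempty α] (r : α → α → Prop) (s : Finset α) : α :=
  Classical.epsilon fun m => m ∈ s ∧ ∀ x ∈ s, x ≠ m → r m x

/-- `((Npart k, Xpart k))_k` is an assignment partition: `Npart` partitions the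
divisions, `Xpart` partitions the workers (both identified with `α`), and for each
group `k` we have separation (`Npart k ∩ Xpart k = ∅`) and balance
(`|Npart k| = |Xpart k|`). -/
def IsAPartition {α : Type*} {K : ℕ} (Npart Xpart : Fin K → Finset α) : Prop :=
  (∀ a : α, ∃! k, a ∈ Npart k) ∧
  (∀ a : α, ∃! k, a ∈ Xpart k) ∧
  (∀ k, ∀ a ∈ Npart k, a ∉ Xpart k) ∧
  (∀ k, (Npart k).card = (Xpart k).card)

/-- The choice set `X_{g(i)}` of division `i`: the worker set of `i`'s group. -/
noncomputable def choiceSet {α : Type*} [DecidableEq α] {K : ℕ}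
    (Npart Xpart : Fin K → Finset α) (i : α) : Finset α :=
  Finset.univ.biUnion fun k => if i ∈ Npart k then Xpart k else ∅

/-- An assignment is feasible under the assignment partition if `μ(N_k) = X_k` for all `k`. -/
def FeasibleAP {α : Type*} [DecidableEq α] {K : ℕ}
    (Npart Xpart : Fin K → Finset α) (μ : α → α) : Prop :=
  ∀ k, (Npart k).image μ = Xpart k

/-- Efficiency under the assignment partition: `μ` is feasible and no feasible
assignment `μ'` weakly improves every division and strictly improves some division. -/
def EfficientAP {α : Type*} [DecidableEq α] {K : ℕ}
    (Npart Xpart : Fin K → Finset α) (pref : α → α → α → Prop) (μ : α → α) : Prop :=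
  FeasibleAP Npart Xpart μ ∧
  ¬ ∃ μ' : α → α, Function.Bijective μ' ∧ FeasibleAP Npart Xpart μ' ∧
      (∀ i, μ' i = μ i ∨ pref i (μ' i) (μ i)) ∧ (∃ j, pref j (μ' j) (μ j))

/-- One pass of the Chain Serial Dictatorship: `cur` is the active division,
`active` the set of divisions that have already chosen, `taken` the workers already
assigned and `μ` the partial assignment.  The active division takes its most
preferred worker in its group's choice set among those not yet taken; the right to
choose passes to the owner of the chosen worker (owner-call) if that owner has not
yet chosen, and otherwise to the `prio`-maximal not-yet-active division (fallback). -/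
noncomputable def csdStep {α : Type*} [Fintype α] [DecidableEq α] [Nonempty α] {K : ℕ}
    (Npart Xpart : Fin K → Finset α) (prio : α → α → Prop)
    (pref : α → α → α → Prop) :
    ℕ → α → Finset α → Finset α → (α → α) → (α → α)
  | 0, _, _, _, μ => μ
  | fuel + 1, cur, active, taken, μ =>
    let w := pick (pref cur) (choiceSet Npart Xpart cur \ taken)
    let active' := insert cur active
    let next := if w ∈ active' then pick prio (Finset.univ \ active') else w
    csdStep Npart Xpart prio pref fuel next active' (insert w taken)
      (Function.update μ cur w)

/-- The Chain Serial Dictatorship (C-SD) mechanism: the first active division is the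
`prio`-maximal one, and the chain runs for `|α|` steps so that every division chooses
exactly one worker. -/
noncomputable def csd {α : Type*} [Fintype α] [DecidableEq α] [Nonempty α] {K : ℕ}
    (Npart Xpart : Fin K → Finset α) (prio : α → α → Prop)
    (pref : α → α → α → Prop) : α → α :=
  csdStep Npart Xpart prio pref (Fintype.card α) (pick prio Finset.univ) ∅ ∅ (fun a => a)

lemma exists_rmax {α : Type*} (r : α → α → Prop) (h : IsStrictTotalOrder α r) :
    ∀ (s : Finset α), s.Nonempty → ∃ m, m ∈ s ∧ ∀ x ∈ s, x ≠ m → r m x := by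
  intro s
  induction s using Finset.induction_on with
  | empty => rintro ⟨x, hx⟩; exact absurd hx (Finset.notMem_empty x)
  | @insert a s ha IH =>
    intro _
    haveI := h
    by_cases hs : s.Nonempty
    · obtain ⟨m, hm, hmax⟩ := IH hs
      rcases trichotomous_of r a m with h1 | h2 | h3
      · refine ⟨a, Finset.mem_insert_self _ _, ?_⟩
        intro x hx hxa
        rcases Finset.mem_insert.1 hx with rfl | hxs
        · exact absurd rfl hxa
        · by_cases hxm : x = m
          · subst hxm; exact h1
          · exact trans_of r h1 (hmax x hxs hxm)
      · exact absurd (h2 ▸ hm) ha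
      · refine ⟨m, Finset.mem_insert_of_mem hm, ?_⟩
        intro x hx hxm
        rcases Finset.mem_insert.1 hx with rfl | hxs
        · exact h3
        · exact hmax x hxs hxm
    · refine ⟨a, Finset.mem_insert_self _ _, ?_⟩
      intro x hx hxa
      rcases Finset.mem_insert.1 hx with rfl | hxs
      · exact absurd rfl hxa
      · exact absurd ⟨x, hxs⟩ hs

lemma pick_spec {α : Type*} [Nonempty α] {r : α → α → Prop} (h : IsStrictTotalOrder α r)
    {s : Finset α} (hs : s.Nonempty) :
    pick r s ∈ s ∧ ∀ x ∈ s, x ≠ pick r s → r (pick r s) x :=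
  Classical.epsilon_spec (exists_rmax r h s hs)

lemma rmax_unique {α : Type*} {r : α → α → Prop} (h : IsStrictTotalOrder α r) {s : Finset α}
    {m m' : α} (h1 : m ∈ s ∧ ∀ x ∈ s, x ≠ m → r m x)
    (h2 : m' ∈ s ∧ ∀ x ∈ s, x ≠ m' → r m' x) : m = m' := by
  haveI := h
  by_contra hne
  exact irrefl_of r m (trans_of r (h1.2 m' h2.1 (Ne.symm hne)) (h2.2 m h1.1 hne))

lemma choiceSet_eq {α : Type*} [DecidableEq α] {K : ℕ}
    (Npart Xpart : Fin K → Finset α) (hu : ∀ a : α, ∃! k, a ∈ Npart k) {g : Fin K} {cur : α}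
    (h : cur ∈ Npart g) : choiceSet Npart Xpart cur = Xpart g := by
  ext x
  simp only [choiceSet, Finset.mem_biUnion, Finset.mem_univ, true_and]
  constructor
  · rintro ⟨k, hk⟩
    split_ifs at hk with hck
    · rwa [(hu cur).unique hck h] at hk
    · exact absurd hk (Finset.notMem_empty x)
  · intro hx
    exact ⟨g, by simp [h, hx]⟩

lemma avail_nonempty {α : Type*} [DecidableEq α] {K : ℕ}
    (Npart Xpart : Fin K → Finset α) (hbal : ∀ k, (Npart k).card = (Xpart k).card)
    {active taken : Finset α} {cur : α} {g : Fin K}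
    (hinv : ∀ k, (Xpart k ∩ taken).card = (Npart k ∩ active).card)
    (hg : cur ∈ Npart g) (hca : cur ∉ active) : (Xpart g \ taken).Nonempty := by
  have h1 : (Npart g ∩ active).card < (Npart g).card := by
    apply Finset.card_lt_card
    rw [Finset.ssubset_iff_of_subset Finset.inter_subset_left]
    exact ⟨cur, hg, fun h => hca (Finset.mem_inter.1 h).2⟩
  have h2 := Finset.card_sdiff_add_card_inter (Xpart g) taken
  rw [← Finset.card_pos]
  have := hinv g
  have := hbal g
  omega

lemma inv_update {α : Type*} [DecidableEq α] {K : ℕ}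
    (Npart Xpart : Fin K → Finset α) (huN : ∀ a : α, ∃! k, a ∈ Npart k) (huX : ∀ a : α, ∃! k, a ∈ Xpart k)
    {active taken : Finset α} {cur w : α} {g : Fin K}
    (hinv : ∀ k, (Xpart k ∩ taken).card = (Npart k ∩ active).card)
    (hg : cur ∈ Npart g) (hca : cur ∉ active) (hwX : w ∈ Xpart g) (hwt : w ∉ taken) :
    ∀ k, (Xpart k ∩ insert w taken).card = (Npart k ∩ insert cur active).card := by
  intro k
  by_cases hk : k = g
  · subst hk
    have e1 : Xpart k ∩ insert w taken = insert w (Xpart k ∩ taken) := by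
      ext x
      by_cases hxw : x = w
      · subst hxw; simp [hwX]
      · simp [hxw]
    have e2 : Npart k ∩ insert cur active = insert cur (Npart k ∩ active) := by
      ext x
      by_cases hxc : x = cur
      · subst hxc; simp [hg]
      · simp [hxc]
    rw [e1, e2, Finset.card_insert_of_notMem (by simp [hwt]),
      Finset.card_insert_of_notMem (by simp [hca]), hinv k]
  · have hwk : w ∉ Xpart k := fun hw => hk ((huX w).unique hw hwX)
    have hck : cur ∉ Npart k := fun hc => hk ((huN cur).unique hc hg)
    have e1 : Xpart k ∩ insert w taken = Xpart k ∩ taken := by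
      ext x
      by_cases hxw : x = w
      · subst hxw; simp [hwk]
      · simp [hxw]
    have e2 : Npart k ∩ insert cur active = Npart k ∩ active := by
      ext x
      by_cases hxc : x = cur
      · subst hxc; simp [hck]
      · simp [hxc]
    rw [e1, e2, hinv k]

lemma csdStep_succ {α : Type*} [Fintype α] [DecidableEq α] [Nonempty α] {K : ℕ}
    (Npart Xpart : Fin K → Finset α) (prio : α → α → Prop) (pref : α → α → α → Prop) (fuel : ℕ) (cur : α) (active taken : Finset α) (μ : α → α) :
    csdStep Npart Xpart prio pref (fuel + 1) cur active taken μ =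
    csdStep Npart Xpart prio pref fuel
      (if pick (pref cur) (choiceSet Npart Xpart cur \ taken) ∈ insert cur active
        then pick prio (Finset.univ \ insert cur active)
        else pick (pref cur) (choiceSet Npart Xpart cur \ taken))
      (insert cur active)
      (insert (pick (pref cur) (choiceSet Npart Xpart cur \ taken)) taken)
      (Function.update μ cur (pick (pref cur) (choiceSet Npart Xpart cur \ taken))) := rfl

lemma next_not_mem {α : Type*} [Fintype α] [DecidableEq α] [Nonempty α]
    {prio : α → α → Prop} (hprio : IsStrictTotalOrder α prio) {A : Finset α} (h : A.card < Fintype.card α) (w : α) :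
    (if w ∈ A then pick prio (Finset.univ \ A) else w) ∉ A := by
  split_ifs with hw
  · have hne : (Finset.univ \ A).Nonempty := by
      rw [Finset.sdiff_nonempty]
      intro hsub
      have := Finset.card_le_card hsub
      rw [Finset.card_univ] at this
      omega
    exact (Finset.mem_sdiff.1 (pick_spec hprio hne).1).2
  · exact hw

/-- Lemma A: once a division is active, its assignment is frozen. -/
lemma csdStep_frozen {α : Type*} [Fintype α] [DecidableEq α] [Nonempty α] {K : ℕ}
    (Npart Xpart : Fin K → Finset α) (prio : α → α → Prop) (hprio : IsStrictTotalOrder α prio) (pref : α → α → α → Prop) :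
    ∀ (fuel : ℕ) (cur : α) (active taken : Finset α) (μ : α → α) (j : α),
      j ∈ active → active.card + fuel ≤ Fintype.card α → (cur ∉ active ∨ fuel = 0) →
      csdStep Npart Xpart prio pref fuel cur active taken μ j = μ j := by
  intro fuel
  induction fuel with
  | zero => intros; rfl
  | succ f IH =>
    intro cur active taken μ j hj hcard hcur
    rcases hcur with hcur | h0
    swap
    · exact absurd h0 (Nat.succ_ne_zero f)
    have hjc : j ≠ cur := fun h => hcur (h ▸ hj)
    have hcard' : (insert cur active).card + f ≤ Fintype.card α := by
      rw [Finset.card_insert_of_notMem hcur]; omega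
    have hnext : (if pick (pref cur) (choiceSet Npart Xpart cur \ taken) ∈ insert cur active
        then pick prio (Finset.univ \ insert cur active)
        else pick (pref cur) (choiceSet Npart Xpart cur \ taken)) ∉ insert cur active ∨ f = 0 := by
      rcases Nat.eq_zero_or_pos f with rfl | hf
      · exact Or.inr rfl
      · refine Or.inl (next_not_mem hprio ?_ _)
        rw [Finset.card_insert_of_notMem hcur]; omega
    rw [csdStep_succ, IH _ _ _ _ j (Finset.mem_insert_of_mem hj) hcard' hnext,
      Function.update_of_ne hjc]

/-- Lemma D: if `i` has not been active yet, it ends up with the pick over its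
choice set minus some superset of the currently taken workers. -/
lemma csdStep_result {α : Type*} [Fintype α] [DecidableEq α] [Nonempty α] {K : ℕ}
    (Npart Xpart : Fin K → Finset α) (prio : α → α → Prop) (hprio : IsStrictTotalOrder α prio) (hpart : IsAPartition Npart Xpart) (pref : α → α → α → Prop)
    (hpref : StrictProfile pref) (i : α) :
    ∀ (fuel : ℕ) (cur : α) (active taken : Finset α) (μ : α → α),
      active.card + fuel = Fintype.card α → cur ∉ active → i ∉ active →
      (∀ k, (Xpart k ∩ taken).card = (Npart k ∩ active).card) →
      ∃ T, taken ⊆ T ∧ (choiceSet Npart Xpart i \ T).Nonempty ∧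
        csdStep Npart Xpart prio pref fuel cur active taken μ i =
          pick (pref i) (choiceSet Npart Xpart i \ T) := by
  intro fuel
  induction fuel with
  | zero =>
    intro cur active taken μ hc _ hi _
    exfalso
    exact hi ((Finset.eq_univ_of_card active (by omega)) ▸ Finset.mem_univ i)
  | succ f IH =>
    intro cur active taken μ hc hcur hi hinv
    obtain ⟨g, hg, -⟩ := hpart.1 cur
    have hcs : choiceSet Npart Xpart cur = Xpart g := choiceSet_eq Npart Xpart hpart.1 hg
    have hSne : (choiceSet Npart Xpart cur \ taken).Nonempty := by
      rw [hcs]; exact avail_nonempty Npart Xpart hpart.2.2.2 hinv hg hcur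
    have hw := pick_spec (hpref cur) hSne
    set w := pick (pref cur) (choiceSet Npart Xpart cur \ taken) with hwdef
    have hwX : w ∈ Xpart g := by have := hw.1; rw [hcs] at this; exact (Finset.mem_sdiff.1 this).1
    have hwt : w ∉ taken := (Finset.mem_sdiff.1 hw.1).2
    by_cases hci : cur = i
    · subst hci
      refine ⟨taken, subset_rfl, hSne, ?_⟩
      rw [csdStep_succ]
      have hcard' : (insert cur active).card + f ≤ Fintype.card α := by
        rw [Finset.card_insert_of_notMem hcur]; omega
      have hnext : (if w ∈ insert cur active then pick prio (Finset.univ \ insert cur active)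
          else w) ∉ insert cur active ∨ f = 0 := by
        rcases Nat.eq_zero_or_pos f with rfl | hf
        · exact Or.inr rfl
        · refine Or.inl (next_not_mem hprio ?_ _)
          rw [Finset.card_insert_of_notMem hcur]; omega
      rw [csdStep_frozen Npart Xpart prio hprio pref f _ _ _ _ cur
        (Finset.mem_insert_self _ _) hcard' hnext, Function.update_self]
    · have hi' : i ∉ insert cur active := by
        simp only [Finset.mem_insert]
        rintro (rfl | h)
        · exact hci rfl
        · exact hi h
      have hf : 0 < f := by
        rcases Nat.eq_zero_or_pos f with rfl | hf
        · exfalso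
          apply hi'
          rw [Finset.eq_univ_of_card (insert cur active)
            (by rw [Finset.card_insert_of_notMem hcur]; omega)]
          exact Finset.mem_univ i
        · exact hf
      have hc' : (insert cur active).card + f = Fintype.card α := by
        rw [Finset.card_insert_of_notMem hcur]; omega
      have hnext : (if w ∈ insert cur active then pick prio (Finset.univ \ insert cur active)
          else w) ∉ insert cur active := by
        refine next_not_mem hprio ?_ _
        rw [Finset.card_insert_of_notMem hcur]; omega
      obtain ⟨T, hT1, hT2, hT3⟩ := IH _ (insert cur active) (insert w taken)
        (Function.update μ cur w) hc' hnext hi'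
        (inv_update Npart Xpart hpart.1 hpart.2.1 hinv hg hcur hwX hwt)
      exact ⟨T, (Finset.subset_insert _ _).trans hT1, hT2, by rw [csdStep_succ]; exact hT3⟩


lemma csdStep_improvement {α : Type*} [Fintype α] [DecidableEq α] [Nonempty α] {K : ℕ}
    (Npart Xpart : Fin K → Finset α) (prio : α → α → Prop)
    (hprio : IsStrictTotalOrder α prio) (hpart : IsAPartition Npart Xpart)
    (pref pref' : α → α → α → Prop)
    (hpref : StrictProfile pref) (hpref' : StrictProfile pref')
    (i : α) (himp : Improvement pref pref' i) :
    ∀ (fuel : ℕ) (cur : α) (active taken : Finset α) (μ : α → α),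
      active.card + fuel = Fintype.card α → cur ∉ active → i ∉ active →
      (∀ k, (Xpart k ∩ taken).card = (Npart k ∩ active).card) →
      csdStep Npart Xpart prio pref' fuel cur active taken μ i =
        csdStep Npart Xpart prio pref fuel cur active taken μ i ∨
      pref i (csdStep Npart Xpart prio pref' fuel cur active taken μ i)
        (csdStep Npart Xpart prio pref fuel cur active taken μ i) := by
  intro fuel
  induction fuel with
  | zero => intro cur active taken μ _ _ _ _; exact Or.inl rfl
  | succ f IH =>
    intro cur active taken μ hc hcur hi hinv
    obtain ⟨g, hg, -⟩ := hpart.1 cur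
    have hcs : choiceSet Npart Xpart cur = Xpart g := choiceSet_eq Npart Xpart hpart.1 hg
    have hSne : (choiceSet Npart Xpart cur \ taken).Nonempty := by
      rw [hcs]; exact avail_nonempty Npart Xpart hpart.2.2.2 hinv hg hcur
    have hw := pick_spec (hpref cur) hSne
    have hw' := pick_spec (hpref' cur) hSne
    have hcard' : (insert cur active).card = active.card + 1 :=
      Finset.card_insert_of_notMem hcur
    by_cases hci : cur = i
    · subst hci
      left
      have hww : pick (pref' cur) (choiceSet Npart Xpart cur \ taken) =
          pick (pref cur) (choiceSet Npart Xpart cur \ taken) := by rw [himp.1]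
      have hcard2 : (insert cur active).card + f ≤ Fintype.card α := by omega
      have hnext : ∀ w : α, (if w ∈ insert cur active then
          pick prio (Finset.univ \ insert cur active) else w) ∉ insert cur active ∨ f = 0 := by
        intro w
        rcases Nat.eq_zero_or_pos f with rfl | hf
        · exact Or.inr rfl
        · exact Or.inl (next_not_mem hprio (by omega) w)
      rw [csdStep_succ, csdStep_succ, hww,
        csdStep_frozen Npart Xpart prio hprio pref' f _ _ _ _ cur
          (Finset.mem_insert_self _ _) hcard2 (hnext _),
        csdStep_frozen Npart Xpart prio hprio pref f _ _ _ _ cur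
          (Finset.mem_insert_self _ _) hcard2 (hnext _)]
    · have hiA' : i ∉ insert cur active := by
        simp only [Finset.mem_insert]
        rintro (rfl | h)
        · exact hci rfl
        · exact hi h
      have hf : 0 < f := by
        rcases Nat.eq_zero_or_pos f with rfl | hf
        · exact absurd ((Finset.eq_univ_of_card (insert cur active) (by omega)) ▸
            Finset.mem_univ i) hiA'
        · exact hf
      have hc' : (insert cur active).card + f = Fintype.card α := by omega
      have hsubg : choiceSet Npart Xpart cur \ taken ⊆ Xpart g := by
        rw [hcs]; exact Finset.sdiff_subset
      have hwX : pick (pref cur) (choiceSet Npart Xpart cur \ taken) ∈ Xpart g :=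
        hsubg hw.1
      have hwt : pick (pref cur) (choiceSet Npart Xpart cur \ taken) ∉ taken :=
        (Finset.mem_sdiff.1 hw.1).2
      have hinv' := inv_update Npart Xpart hpart.1 hpart.2.1 hinv hg hcur hwX hwt
      have hnextR : (if pick (pref cur) (choiceSet Npart Xpart cur \ taken) ∈ insert cur active
          then pick prio (Finset.univ \ insert cur active)
          else pick (pref cur) (choiceSet Npart Xpart cur \ taken)) ∉ insert cur active :=
        next_not_mem hprio (by omega) _
      by_cases hww : pick (pref' cur) (choiceSet Npart Xpart cur \ taken) =
          pick (pref cur) (choiceSet Npart Xpart cur \ taken)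
      · rw [csdStep_succ, csdStep_succ, hww]
        exact IH _ _ _ _ hc' hnextR hiA' hinv'
      · -- the improved-run picks worker i here
        have hwi' : pick (pref' cur) (choiceSet Npart Xpart cur \ taken) = i := by
          by_cases hwi0 : pick (pref cur) (choiceSet Npart Xpart cur \ taken) = i
          · refine rmax_unique (hpref' cur) hw' ⟨hwi0 ▸ hw.1, ?_⟩
            intro x hx hxi
            exact himp.2.1 cur hci x hxi (hwi0 ▸ hw.2 x hx (by rw [hwi0]; exact hxi))
          · by_contra hne
            have h1 : pref cur (pick (pref cur) (choiceSet Npart Xpart cur \ taken))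
                (pick (pref' cur) (choiceSet Npart Xpart cur \ taken)) :=
              hw.2 _ hw'.1 hww
            have h2 : pref' cur (pick (pref' cur) (choiceSet Npart Xpart cur \ taken))
                (pick (pref cur) (choiceSet Npart Xpart cur \ taken)) :=
              hw'.2 _ hw.1 (fun h => hww h.symm)
            have h3 := (himp.2.2 cur hci _ hne _ hwi0).2 h2
            haveI := hpref cur
            exact irrefl_of (pref cur) _ (trans_of (pref cur) h1 h3)
        obtain ⟨f2, rfl⟩ : ∃ f2, f = f2 + 1 := ⟨f - 1, by omega⟩
        obtain ⟨gi, hgi, -⟩ := hpart.1 i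
        have hcsi : choiceSet Npart Xpart i = Xpart gi := choiceSet_eq Npart Xpart hpart.1 hgi
        have hisep : i ∉ Xpart gi := hpart.2.2.1 gi i hgi
        have hAne : (Xpart gi \ taken).Nonempty :=
          avail_nonempty Npart Xpart hpart.2.2.2 hinv hgi hi
        -- compute the improved-run value for i
        have hset : choiceSet Npart Xpart i \ insert i taken = Xpart gi \ taken := by
          rw [hcsi]
          ext x
          simp only [Finset.mem_sdiff, Finset.mem_insert, not_or]
          constructor
          · rintro ⟨h1, _, h3⟩; exact ⟨h1, h3⟩
          · rintro ⟨h1, h3⟩; exact ⟨h1, fun hx => hisep (hx ▸ h1), h3⟩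
        have hvdef : pick (pref' i) (choiceSet Npart Xpart i \ insert i taken) =
            pick (pref i) (Xpart gi \ taken) := by rw [hset, himp.1]
        have hcard2 : (insert i (insert cur active)).card + f2 ≤ Fintype.card α := by
          rw [Finset.card_insert_of_notMem hiA']; omega
        have hnext2 : ∀ w : α, (if w ∈ insert i (insert cur active) then
            pick prio (Finset.univ \ insert i (insert cur active)) else w) ∉
              insert i (insert cur active) ∨ f2 = 0 := by
          intro w
          rcases Nat.eq_zero_or_pos f2 with rfl | hf2
          · exact Or.inr rfl
          · exact Or.inl (next_not_mem hprio
              (by rw [Finset.card_insert_of_notMem hiA']; omega) w)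
        have eL : csdStep Npart Xpart prio pref' (f2 + 1 + 1) cur active taken μ i =
            pick (pref i) (Xpart gi \ taken) := by
          rw [csdStep_succ, hwi', if_neg hiA', csdStep_succ, hvdef,
            csdStep_frozen Npart Xpart prio hprio pref' f2 _ _ _ _ i
              (Finset.mem_insert_self _ _) hcard2 (hnext2 _),
            Function.update_self]
        -- compute the original-run value for i
        obtain ⟨T, hT1, hT2, hT3⟩ := csdStep_result Npart Xpart prio hprio hpart pref hpref i
          (f2 + 1) _ (insert cur active)
          (insert (pick (pref cur) (choiceSet Npart Xpart cur \ taken)) taken)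
          (Function.update μ cur (pick (pref cur) (choiceSet Npart Xpart cur \ taken)))
          hc' hnextR hiA' hinv'
        rw [hcsi] at hT2 hT3
        have eR : csdStep Npart Xpart prio pref (f2 + 1 + 1) cur active taken μ i =
            pick (pref i) (Xpart gi \ T) := by rw [csdStep_succ]; exact hT3
        rw [eL, eR]
        have hsub : Xpart gi \ T ⊆ Xpart gi \ taken :=
          Finset.sdiff_subset_sdiff subset_rfl ((Finset.subset_insert _ _).trans hT1)
        have ha := pick_spec (hpref i) hAne
        have hb := pick_spec (hpref i) hT2
        by_cases hab : pick (pref i) (Xpart gi \ taken) = pick (pref i) (Xpart gi \ T)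
        · exact Or.inl hab
        · exact Or.inr (ha.2 _ (hsub hb.1) (fun h => hab h.symm))


/-- Chain Serial Dictatorship respects improvement: whenever `pref'` is an
improvement for division `i` with respect to `pref`, division `i` weakly prefers
its C-SD assignment under `pref'` to its C-SD assignment under `pref`. -/
theorem csd_respects_improvement {α : Type*} [Fintype α] [DecidableEq α] [Nonempty α]
    {K : ℕ} (Npart Xpart : Fin K → Finset α)
    (hpart : IsAPartition Npart Xpart)
    (prio : α → α → Prop) (hprio : IsStrictTotalOrder α prio)
    (pref pref' : α → α → α → Prop)
    (hpref : StrictProfile pref) (hpref' : StrictProfile pref')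
    (i : α) (himp : Improvement pref pref' i) :
    csd Npart Xpart prio pref' i = csd Npart Xpart prio pref i ∨
    pref i (csd Npart Xpart prio pref' i) (csd Npart Xpart prio pref i) := by
  unfold csd
  exact csdStep_improvement Npart Xpart prio hprio hpart pref pref' hpref hpref' i himp
    (Fintype.card α) _ ∅ ∅ _ (by simp) (Finset.notMem_empty _) (Finset.notMem_empty _)
    (by simp)
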